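/- Let J be an almost-complex structure and g a J-compatible metric on a vector space, with ω(·,·) = g(J·,·). If X is a vector field with L_X ω = 0 on an almost-Kähler manifold (M, ω, J, g), then the symmetric part of the tensor D^g X (equivalently of the 1-form valued tensor g(D^g_· X, ·)) equals (1/2) g((L_X J) J ·, ·); in particular, the symmetric part of D^g(d^c f) is J-anti-invariant for any smooth function f (taking X = grad_ω f). -/

import Mathlib

noncomputable section

/-- An abstract model of the vector-field calculus of an almost-Kähler
manifold: `R` plays the role of the ring of smooth functions, `X` of the
module of vector fields, `act` of the derivation action of vector fields on
functions, `bracket` of the Lie bracket, `D` of the Levi-Civita connection,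
`J` of the almost-complex structure, `g` of the Riemannian metric and `ω` of
the (closed) symplectic form, with `g(·,·) = ω(·, J·)`. -/
structure AK (R : Type*) (X : Type*) [CommRing R] [Algebra ℝ R]
    [AddCommGroup X] [Module R X] where
  act : X → R → R
  bracket : X → X → X
  D : X → X → X
  J : X → X
  g : X → X → R
  ω : X → X → R
  act_addx : ∀ x y f, act (x + y) f = act x f + act y f
  act_smulx : ∀ (h : R) (x : X) (f : R), act (h • x) f = h * act x f
  act_addf : ∀ x f h, act x (f + h) = act x f + act x h
  act_deriv : ∀ x f h, act x (f * h) = act x f * h + f * act x h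
  act_bracket : ∀ x y f, act (bracket x y) f = act x (act y f) - act y (act x f)
  bracket_antisymm : ∀ x y, bracket x y = - bracket y x
  g_symm : ∀ x y, g x y = g y x
  g_add₁ : ∀ x y z, g (x + y) z = g x z + g y z
  g_add₂ : ∀ x y z, g x (y + z) = g x y + g x z
  g_smul₁ : ∀ (f : R) x y, g (f • x) y = f * g x y
  g_smul₂ : ∀ (f : R) x y, g x (f • y) = f * g x y
  g_nondeg : ∀ x, (∀ y, g x y = 0) → x = 0
  J_add : ∀ x y, J (x + y) = J x + J y
  J_smul : ∀ (f : R) x, J (f • x) = f • J x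
  J_sq : ∀ x, J (J x) = - x
  compat : ∀ x y, g x y = ω x (J y)
  g_Jinv : ∀ x y, g (J x) (J y) = g x y
  D_add₁ : ∀ x y z, D (x + y) z = D x z + D y z
  D_add₂ : ∀ x y z, D x (y + z) = D x y + D x z
  D_tensor : ∀ (f : R) x y, D (f • x) y = f • D x y
  D_leibniz : ∀ (f : R) x y, D x (f • y) = act x f • y + f • D x y
  D_torsionfree : ∀ x y, D x y - D y x = bracket x y
  D_metric : ∀ x y z, act x (g y z) = g (D x y) z + g y (D x z)
  ω_closed : ∀ x y z,
    act x (ω y z) - act y (ω x z) + act z (ω x y)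
      - ω (bracket x y) z + ω (bracket x z) y - ω (bracket y z) x = 0

namespace AK

variable {R : Type*} {X : Type*} [CommRing R] [Algebra ℝ R]
  [AddCommGroup X] [Module R X] [Module ℝ X] (C : AK R X)

/-- The Nijenhuis tensor `4N(X,Y) = [JX,JY] - [X,Y] - J[JX,Y] - J[X,JY]`. -/
def N (x y : X) : X :=
  (4 : ℝ)⁻¹ • (C.bracket (C.J x) (C.J y) - C.bracket x y
    - C.J (C.bracket (C.J x) y) - C.J (C.bracket x (C.J y)))

/-- The covariant derivative `(D_X J)(Y)` of `J`. -/
def DJ (x y : X) : X := C.D x (C.J y) - C.J (C.D x y)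

/-- The Riemann curvature operator `R(X,Y)Z`. -/
def Riem (x y z : X) : X :=
  C.D x (C.D y z) - C.D y (C.D x z) - C.D (C.bracket x y) z

variable {ι : Type*} [Fintype ι] [DecidableEq ι]

/-- The `*`-Ricci form `ρ* = R(ω)`, computed in the orthonormal frame `e`:
`ρ*(X,Y) = (1/2) ∑ᵢ g(R(X,Y)eᵢ, Jeᵢ)`. -/
def rhoStar (e : ι → X) (x y : X) : R :=
  (2 : ℝ)⁻¹ • ∑ i, C.g (C.Riem x y (e i)) (C.J (e i))

/-- The hermitian Ricci form of the canonical hermitian connection, via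
`ρ^∇(X,Y) = ρ*(X,Y) - (1/4) tr(J ∘ D_X J ∘ D_Y J)` (identity (2.10)). -/
def rho (e : ι → X) (x y : X) : R :=
  C.rhoStar e x y
    - (4 : ℝ)⁻¹ • ∑ i, C.g (C.J (C.DJ x (C.DJ y (e i)))) (e i)

/-- The hermitian scalar curvature `s^∇ = 2Λ_ω ρ^∇ = ∑ᵢ ρ^∇(eᵢ, Jeᵢ)`. -/
def scalH (e : ι → X) : R := ∑ i, C.rho e (e i) (C.J (e i))

/-- The Riemannian Laplacian `Δ f = -tr_g (D df)`. -/
def lap (e : ι → X) (f : R) : R :=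
  - ∑ i, (C.act (e i) (C.act (e i) f) - C.act (C.D (e i) (e i)) f)

/-- `e` is a `g`-orthonormal frame of the module of vector fields. -/
def IsFrame (e : ι → X) : Prop :=
  (∀ i j, C.g (e i) (e j) = if i = j then 1 else 0) ∧
    ∀ x, x = ∑ i, C.g x (e i) • e i

/-- `x` is a Killing vector field: `L_x g = 0`. -/
def Killing (x : X) : Prop :=
  ∀ y z, C.act x (C.g y z) - C.g (C.bracket x y) z - C.g y (C.bracket x z) = 0

/-- `x` is a (pseudo-)holomorphic vector field: `L_x J = 0`. -/
def Holomorphic (x : X) : Prop :=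
  ∀ y, C.bracket x (C.J y) = C.J (C.bracket x y)

/-- `x` is hamiltonian with hamiltonian function `f`: `ω(x, ·) = -df`. -/
def Hamiltonian (x : X) (f : R) : Prop := ∀ y, C.ω x y = - C.act y f

end AK

end

/-! The identity is the tensorial form of `0 = (L_X ω)(JY, Z) = -(L_X g)(Y, Z) + g((L_X J)JY, Z)`,
combined with `(L_X g)(Y, Z) = g(D_Y X, Z) + g(Y, D_Z X)` (torsion-freeness and metricity of `D`).
Anti-invariance follows because `L_X J` anticommutes with `J`. For `X = grad_ω f` one has
`d^c f = g(X, ·)`, so `D(d^c f) = g(D_· X, ·)` and its symmetric part is `(1/2) L_X g`. -/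

namespace AK

variable {R : Type*} {X : Type*} [CommRing R] [Algebra ℝ R]
  [AddCommGroup X] [Module R X] (C : AK R X)

def lieDerivMetric (x y z : X) : R :=
  C.act x (C.g y z) - C.g (C.bracket x y) z - C.g y (C.bracket x z)

def lieDerivOmega (x y z : X) : R :=
  C.act x (C.ω y z) - C.ω (C.bracket x y) z - C.ω y (C.bracket x z)

def lieDerivJ (x y : X) : X := C.bracket x (C.J y) - C.J (C.bracket x y)

lemma act_neg (x : X) (a : R) : C.act x (-a) = -C.act x a :=
  (AddMonoidHom.mk' (C.act x) (C.act_addf x)).map_neg a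

lemma D_neg_left (x y : X) : C.D (-x) y = -C.D x y := by
  rw [← neg_one_smul R x, C.D_tensor, neg_one_smul]

lemma D_neg_right (x y : X) : C.D x (-y) = -C.D x y :=
  (AddMonoidHom.mk' (C.D x) (C.D_add₂ x)).map_neg y

lemma J_neg (y : X) : C.J (-y) = -C.J y :=
  (AddMonoidHom.mk' C.J C.J_add).map_neg y

lemma J_sub (y z : X) : C.J (y - z) = C.J y - C.J z :=
  (AddMonoidHom.mk' C.J C.J_add).map_sub y z

lemma g_neg_left (y z : X) : C.g (-y) z = -C.g y z :=
  (AddMonoidHom.mk' (C.g · z) (C.g_add₁ · · z)).map_neg y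

lemma g_neg_right (y z : X) : C.g y (-z) = -C.g y z :=
  (AddMonoidHom.mk' (C.g y) (C.g_add₂ y)).map_neg z

lemma g_sub_left (y z w : X) : C.g (y - z) w = C.g y w - C.g z w :=
  (AddMonoidHom.mk' (C.g · w) (C.g_add₁ · · w)).map_sub y z

lemma bracket_neg_right (x y : X) : C.bracket x (-y) = -C.bracket x y := by
  rw [← C.D_torsionfree, ← C.D_torsionfree, C.D_neg_right, C.D_neg_left, neg_sub_neg, neg_sub]

lemma ω_eq_neg_g_J (u v : X) : C.ω u v = -C.g u (C.J v) := by
  rw [← C.g_neg_right, C.compat, C.J_neg, C.J_sq, neg_neg]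

lemma g_J_left (u v : X) : C.g (C.J u) v = -C.g u (C.J v) := by
  rw [← C.g_neg_right, ← C.g_Jinv u (-(C.J v)), C.J_neg, C.J_sq, neg_neg]

lemma lieDerivMetric_eq (x y z : X) :
    C.lieDerivMetric x y z = C.g (C.D y x) z + C.g (C.D z x) y := by
  have hy := sub_eq_iff_eq_add.mp (C.D_torsionfree x y)
  have hz := sub_eq_iff_eq_add.mp (C.D_torsionfree x z)
  rw [lieDerivMetric, C.D_metric, hy, hz, C.g_add₁, C.g_add₂, C.g_symm y (C.D z x)]
  ring

lemma lieDerivOmega_J_left (x y z : X) :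
    C.lieDerivOmega x (C.J y) z = C.g (C.lieDerivJ x (C.J y)) z - C.lieDerivMetric x y z := by
  simp only [lieDerivOmega, lieDerivMetric, lieDerivJ, ω_eq_neg_g_J, g_J_left, J_sq,
    bracket_neg_right, g_sub_left, g_neg_left, g_neg_right, act_neg]
  ring

lemma lieDerivJ_J (x y : X) : C.lieDerivJ x (C.J y) = -C.J (C.lieDerivJ x y) := by
  rw [lieDerivJ, lieDerivJ, C.J_sub, C.J_sq, C.J_sq, C.bracket_neg_right]
  abel

section Symplectic

variable {C} {x : X} (hLω : ∀ y z, C.lieDerivOmega x y z = 0)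
include hLω

lemma lieDerivMetric_eq_of_lieDerivOmega_eq_zero (y z : X) :
    C.lieDerivMetric x y z = C.g (C.lieDerivJ x (C.J y)) z := by
  linear_combination C.lieDerivOmega_J_left x y z - hLω (C.J y) z

lemma lieDerivMetric_J_J_of_lieDerivOmega_eq_zero (y z : X) :
    C.lieDerivMetric x (C.J y) (C.J z) = -C.lieDerivMetric x y z := by
  rw [lieDerivMetric_eq_of_lieDerivOmega_eq_zero hLω, lieDerivMetric_eq_of_lieDerivOmega_eq_zero hLω,
    C.lieDerivJ_J, C.g_neg_left, C.g_Jinv]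

end Symplectic

lemma act_J_eq_neg_g_of_hamiltonian [Module ℝ X] {x : X} {f : R} (hf : C.Hamiltonian x f)
    (v : X) : C.act (C.J v) f = -C.g x v := by
  rw [C.compat, hf, neg_neg]

lemma g_D_eq_of_hamiltonian [Module ℝ X] {x : X} {f : R} (hf : C.Hamiltonian x f) (u v : X) :
    C.act u (-(C.act (C.J v) f)) + C.act (C.J (C.D u v)) f = C.g (C.D u x) v := by
  rw [C.act_J_eq_neg_g_of_hamiltonian hf, C.act_J_eq_neg_g_of_hamiltonian hf, neg_neg, C.D_metric]
  ring

end AK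

theorem symmetric_part_of_DX_and_anti_invariance_general
    {R : Type*} {X : Type*} [CommRing R] [Algebra ℝ R]
    [AddCommGroup X] [Module R X] [Module ℝ X]
    (C : AK R X) (x : X)
    (hLω : ∀ y z,
      C.act x (C.ω y z) - C.ω (C.bracket x y) z - C.ω y (C.bracket x z) = 0) :
    (∀ y z,
      (2 : ℝ)⁻¹ • (C.g (C.D y x) z + C.g (C.D z x) y)
        = (2 : ℝ)⁻¹ •
            C.g (C.bracket x (C.J (C.J y)) - C.J (C.bracket x (C.J y))) z) ∧
    (∀ f : R, C.Hamiltonian x f →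
      ∀ S : X → X → R,
        (∀ u v, S u v = C.act u (-(C.act (C.J v) f)) + C.act (C.J (C.D u v)) f) →
        ∀ y z,
          (2 : ℝ)⁻¹ • (S (C.J y) (C.J z) + S (C.J z) (C.J y))
            = -((2 : ℝ)⁻¹ • (S y z + S z y))) := by
  refine ⟨fun y z => ?_, fun f hf S hS y z => ?_⟩
  · rw [← C.lieDerivMetric_eq, AK.lieDerivMetric_eq_of_lieDerivOmega_eq_zero hLω]
    rfl
  · simp only [hS, C.g_D_eq_of_hamiltonian hf, ← C.lieDerivMetric_eq,
      AK.lieDerivMetric_J_J_of_lieDerivOmega_eq_zero hLω, smul_neg]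

/-- If `L_X ω = 0`, then the symmetric part of the tensor `g(D^g_· X, ·)`
equals `(1/2) g((L_X J) J·, ·)`; in particular, for `X = grad_ω f` the
symmetric part of `D^g (d^c f)` is `J`-anti-invariant (the tensorial fact used
in Proposition 3.2). Here `(d^c f)(v) = -(df)(Jv)` and
`(D_u (d^c f))(v) = u·(d^c f(v)) - d^c f(D_u v)`. -/
theorem symmetric_part_of_DX_and_anti_invariance
    {R : Type*} {X : Type*} [CommRing R] [Algebra ℝ R]
    [AddCommGroup X] [Module R X] [Module ℝ X] [IsScalarTower ℝ R X]
    (C : AK R X) (x : X)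
    (hLω : ∀ y z,
      C.act x (C.ω y z) - C.ω (C.bracket x y) z - C.ω y (C.bracket x z) = 0) :
    (∀ y z,
      (2 : ℝ)⁻¹ • (C.g (C.D y x) z + C.g (C.D z x) y)
        = (2 : ℝ)⁻¹ •
            C.g (C.bracket x (C.J (C.J y)) - C.J (C.bracket x (C.J y))) z) ∧
    (∀ f : R, C.Hamiltonian x f →
      ∀ S : X → X → R,
        (∀ u v, S u v = C.act u (-(C.act (C.J v) f)) + C.act (C.J (C.D u v)) f) →
        ∀ y z,
          (2 : ℝ)⁻¹ • (S (C.J y) (C.J z) + S (C.J z) (C.J y))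
            = -((2 : ℝ)⁻¹ • (S y z + S z y))) :=
  symmetric_part_of_DX_and_anti_invariance_general C x hLω
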